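/- arXiv:1902.08521 — 2 statements merged into one kernel-verified Lean document; each statement's English description precedes it below -/
import Mathlib

section
/- For every p ∈ [1, ∞) there is a constant C_p such that for all smooth functions f, g on the torus T^d and every positive integer λ, one has | ‖f · g_λ‖_{L^p(T^d)} - ‖f‖_{L^p(T^d)} ‖g‖_{L^p(T^d)} | ≤ (C_p / λ^{1/p}) ‖f‖_{C^1} ‖g‖_{L^p(T^d)}, where g_λ(x) := g(λx). -/
open MeasureTheory Finset
open scoped ENNReal RealInnerProductSpace

noncomputable section

/-- `ℝ^d` with the Euclidean norm. -/
abbrev Ed (d : ℕ) : Type := EuclideanSpace ℝ (Fin d)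

/-- The fundamental domain `[0,1)^d` of the flat torus `𝕋^d = ℝ^d/ℤ^d`. -/
def cube (d : ℕ) : Set (Ed d) := {x | ∀ i, x i ∈ Set.Ico (0:ℝ) 1}

/-- Lebesgue measure restricted to the fundamental domain (i.e. the measure of `𝕋^d`). -/
def cubeVol (d : ℕ) : Measure (Ed d) := (volume : Measure (Ed d)).restrict (cube d)

/-- An integer vector, viewed as an element of `ℝ^d`. -/
def intVec (d : ℕ) (k : Fin d → ℤ) : Ed d := WithLp.toLp 2 (fun i => (k i : ℝ))

/-- A function on `ℝ^d` is `ℤ^d`-periodic, i.e. a function on the torus `𝕋^d`. -/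
def PeriodicZd {F : Type*} (d : ℕ) (f : Ed d → F) : Prop :=
  ∀ (x : Ed d) (k : Fin d → ℤ), f (x + intVec d k) = f x

/-- The `L^q(𝕋^d)` norm of a (periodic) function. -/
def lpN (d : ℕ) (q : ℝ≥0∞) {F : Type*} [NormedAddCommGroup F] (f : Ed d → F) : ℝ :=
  (eLpNorm f q (cubeVol d)).toReal

/-- The Laplacian. -/
def lap (d : ℕ) (f : Ed d → ℝ) : Ed d → ℝ :=
  fun x => ∑ i : Fin d, iteratedFDeriv ℝ 2 f x (fun _ => EuclideanSpace.single i (1:ℝ))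

/-- The divergence of a vector field. -/
def divg (d : ℕ) (V : Ed d → Ed d) : Ed d → ℝ :=
  fun x => ∑ i : Fin d, fderiv ℝ V x (EuclideanSpace.single i (1:ℝ)) i

/-- The `W^{m,q}(𝕋^d)` norm. -/
def sobN (d m : ℕ) (q : ℝ≥0∞) {F : Type*} [NormedAddCommGroup F] [NormedSpace ℝ F]
    (f : Ed d → F) : ℝ :=
  ∑ k ∈ Finset.range (m + 1), lpN d q (fun x => iteratedFDeriv ℝ k f x)

/-- The Euclidean distance on the flat torus `𝕋^d = ℝ^d/ℤ^d`. -/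
def torusDist (d : ℕ) (x y : Ed d) : ℝ := ⨅ k : Fin d → ℤ, ‖x - y - intVec d k‖

/-!
Write `F = |f|^p` and `G = |g|^p`. Cut `[0,1)^d` into the `λ^d` subcubes of side `1/λ`: on each
of them `G(λ·)` runs through one full period of `G`, while `F` varies by at most
`p ‖f‖_∞^{p-1} ‖∇f‖_∞ √d / λ`. Hence `∫ F G(λ·)` differs from `∫ F · ∫ G` by at most that
oscillation times `∫ G`. Since `t ↦ t^{1/p}` is `1/p`-Hölder on `[0, ∞)`, this becomes a bound
on the difference of the `L^p` norms, and `(‖f‖_∞^{p-1} ‖∇f‖_∞)^{1/p} ≤ ‖f‖_{C¹}`.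
-/

section Cube

variable {d : ℕ}

lemma measurableSet_cube (d : ℕ) : MeasurableSet (cube d) := by
  simp only [cube, Set.ofPred_forall]
  exact .iInter fun i => measurableSet_Ico.preimage (by fun_prop)

lemma volume_cube (d : ℕ) : volume (cube d) = 1 := by
  have hpre : (MeasurableEquiv.toLp 2 (Fin d → ℝ)).symm ⁻¹'
      (Set.pi Set.univ fun _ => Set.Ico (0 : ℝ) 1) = cube d := by
    ext x; simp [cube, Set.mem_pi]
  rw [← hpre, (EuclideanSpace.volume_preserving_symm_measurableEquiv_toLp (Fin d)).measure_preimage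
    (MeasurableSet.univ_pi fun _ => measurableSet_Ico).nullMeasurableSet, volume_pi_pi]
  simp

instance (d : ℕ) : IsProbabilityMeasure (cubeVol d) :=
  ⟨by rw [cubeVol, Measure.restrict_apply_univ, volume_cube]⟩

lemma zero_mem_cube (d : ℕ) : (0 : Ed d) ∈ cube d := fun _ => by simp

lemma norm_sub_le_sqrt_of_mem_cube {x y : Ed d} (hx : x ∈ cube d) (hy : y ∈ cube d) :
    ‖x - y‖ ≤ √d := by
  rw [EuclideanSpace.norm_eq]
  refine Real.sqrt_le_sqrt ?_
  calc ∑ i, ‖(x - y) i‖ ^ 2 ≤ ∑ _i : Fin d, (1 : ℝ) := by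
        refine Finset.sum_le_sum fun i _ => ?_
        obtain ⟨⟨hx0, hx1⟩, ⟨hy0, hy1⟩⟩ := And.intro (hx i) (hy i)
        rw [PiLp.sub_apply, Real.norm_eq_abs, sq_abs]
        nlinarith
    _ = d := by simp

lemma cube_subset_closedBall (d : ℕ) : cube d ⊆ Metric.closedBall 0 √d := fun x hx => by
  simpa using norm_sub_le_sqrt_of_mem_cube hx (zero_mem_cube d)

lemma Continuous.integrable_cubeVol {E : Type*} [NormedAddCommGroup E] {H : Ed d → E}
    (hH : Continuous H) : Integrable H (cubeVol d) :=
  (hH.continuousOn.integrableOn_compact (isCompact_closedBall _ _)).mono_set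
    (cube_subset_closedBall d)

lemma lpN_eq_integral_norm_rpow {E : Type*} [NormedAddCommGroup E] {p : ℝ} (hp : 0 < p)
    {h : Ed d → E} (hh : AEStronglyMeasurable h (cubeVol d)) :
    lpN d (ENNReal.ofReal p) h = (∫ x, ‖h x‖ ^ p ∂cubeVol d) ^ p⁻¹ := by
  rw [lpN, toReal_eLpNorm hh, lpNorm_eq_integral_norm_rpow_toReal (by simpa using hp)
    ENNReal.ofReal_ne_top hh, ENNReal.toReal_ofReal hp.le]

end Cube

section Subcube

variable {d lam : ℕ}

def subcubeMap (lam : ℕ) (k : Fin d → Fin lam) (y : Ed d) : Ed d :=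
  (lam : ℝ)⁻¹ • (y + intVec d fun i => (k i : ℤ))

lemma continuous_subcubeMap (k : Fin d → Fin lam) : Continuous (subcubeMap lam k) := by
  unfold subcubeMap; fun_prop

lemma subcubeMap_apply (k : Fin d → Fin lam) (y : Ed d) (i : Fin d) :
    subcubeMap lam k y i = (lam : ℝ)⁻¹ * (y i + (k i : ℕ)) := by
  simp [subcubeMap, intVec, mul_add]

lemma smul_subcubeMap (hlam : 0 < lam) (k : Fin d → Fin lam) (y : Ed d) :
    (lam : ℝ) • subcubeMap lam k y = y + intVec d fun i => (k i : ℤ) := by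
  rw [subcubeMap, smul_smul, mul_inv_cancel₀ (by positivity), one_smul]

lemma norm_subcubeMap_sub (k : Fin d → Fin lam) (x y : Ed d) :
    ‖subcubeMap lam k x - subcubeMap lam k y‖ = (lam : ℝ)⁻¹ * ‖x - y‖ := by
  rw [subcubeMap, subcubeMap, ← smul_sub, add_sub_add_right_eq_sub, norm_smul, norm_inv,
    RCLike.norm_natCast]

lemma mem_image_subcubeMap (hlam : 0 < lam) {k : Fin d → Fin lam} {x : Ed d} :
    x ∈ subcubeMap lam k '' cube d ↔ ∀ i, (lam : ℝ) * x i - (k i : ℕ) ∈ Set.Ico (0 : ℝ) 1 := by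
  have hl : (lam : ℝ) ≠ 0 := by positivity
  constructor
  · rintro ⟨y, hy, rfl⟩ i
    simpa [subcubeMap_apply, mul_inv_cancel_left₀ hl] using hy i
  · intro h
    refine ⟨WithLp.toLp 2 fun i => (lam : ℝ) * x i - (k i : ℕ), h, ?_⟩
    ext i
    rw [subcubeMap_apply]
    field_simp
    simp

lemma cube_eq_iUnion_image_subcubeMap (hlam : 0 < lam) :
    cube d = ⋃ k : Fin d → Fin lam, subcubeMap lam k '' cube d := by
  ext x
  simp only [Set.mem_iUnion, mem_image_subcubeMap hlam]
  constructor
  · intro hx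
    have hl : (0 : ℝ) < lam := by positivity
    have h0 : ∀ i, 0 ≤ (lam : ℝ) * x i := fun i => mul_nonneg hl.le (hx i).1
    have hfloor : ∀ i, ⌊(lam : ℝ) * x i⌋₊ < lam := fun i =>
      (Nat.floor_lt (h0 i)).2 (mul_lt_of_lt_one_right hl (hx i).2)
    refine ⟨fun i => ⟨_, hfloor i⟩, fun i => ?_⟩
    exact ⟨sub_nonneg.2 (Nat.floor_le (h0 i)), by linarith [Nat.lt_floor_add_one ((lam : ℝ) * x i)]⟩
  · rintro ⟨k, hk⟩ i
    have hki : ((k i : ℕ) : ℝ) + 1 ≤ lam := by exact_mod_cast (k i).2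
    have hl : (0 : ℝ) < lam := by positivity
    obtain ⟨h0, h1⟩ := hk i
    constructor
    · nlinarith [(Nat.cast_nonneg (k i : ℕ) : (0 : ℝ) ≤ _)]
    · nlinarith

lemma pairwise_disjoint_image_subcubeMap (hlam : 0 < lam) :
    Pairwise (Function.onFun Disjoint fun k : Fin d → Fin lam => subcubeMap lam k '' cube d) := by
  intro k k' hne
  refine Set.disjoint_left.2 fun x hx hx' => hne (funext fun i => Fin.ext ?_)
  rw [mem_image_subcubeMap hlam] at hx hx'
  obtain ⟨⟨h0, h1⟩, ⟨h0', h1'⟩⟩ := And.intro (hx i) (hx' i)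
  have hlt : ((k i : ℕ) : ℝ) < (k' i : ℕ) + 1 := by linarith
  have hlt' : ((k' i : ℕ) : ℝ) < (k i : ℕ) + 1 := by linarith
  norm_cast at hlt hlt'
  omega

lemma measurableSet_image_subcubeMap (hlam : 0 < lam) (k : Fin d → Fin lam) :
    MeasurableSet (subcubeMap lam k '' cube d) := by
  have : subcubeMap lam k '' cube d =
      ⋂ i, (fun x : Ed d => (lam : ℝ) * x i - (k i : ℕ)) ⁻¹' Set.Ico (0 : ℝ) 1 := by
    ext x
    simp [mem_image_subcubeMap hlam]
  rw [this]
  exact .iInter fun i => measurableSet_Ico.preimage (by fun_prop)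

lemma setIntegral_image_subcubeMap (hlam : 0 < lam) (k : Fin d → Fin lam) (H : Ed d → ℝ) :
    ∫ x in subcubeMap lam k '' cube d, H x =
      ((lam : ℝ) ^ d)⁻¹ * ∫ y, H (subcubeMap lam k y) ∂cubeVol d := by
  set A : Ed d →L[ℝ] Ed d := (lam : ℝ)⁻¹ • ContinuousLinearMap.id ℝ (Ed d)
  have hderiv : ∀ y ∈ cube d, HasFDerivWithinAt (subcubeMap lam k) A (cube d) y := fun y _ =>
    (((hasFDerivAt_id y).add_const _).const_smul (lam : ℝ)⁻¹).hasFDerivWithinAt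
  have hinj : Set.InjOn (subcubeMap lam k) (cube d) := fun x _ y _ hxy => by
    have := norm_subcubeMap_sub k x y
    rw [hxy, sub_self, norm_zero, zero_eq_mul, or_iff_right (by positivity),
      norm_sub_eq_zero_iff] at this
    exact this
  have hdet : A.det = ((lam : ℝ) ^ d)⁻¹ := by
    rw [ContinuousLinearMap.det, show (A : Ed d →ₗ[ℝ] Ed d) = (lam : ℝ)⁻¹ • LinearMap.id from rfl,
      LinearMap.det_smul, finrank_euclideanSpace_fin, LinearMap.det_id, mul_one, inv_pow]
  rw [integral_image_eq_integral_abs_det_fderiv_smul volume (measurableSet_cube d) hderiv hinj,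
    hdet, abs_of_nonneg (by positivity), cubeVol, ← integral_const_mul]
  rfl

lemma integral_cubeVol_eq_sum_subcubeMap (hlam : 0 < lam) {H : Ed d → ℝ}
    (hH : Integrable H (cubeVol d)) :
    ∫ x, H x ∂cubeVol d =
      ((lam : ℝ) ^ d)⁻¹ * ∑ k : Fin d → Fin lam, ∫ y, H (subcubeMap lam k y) ∂cubeVol d := by
  have hsub : ∀ k : Fin d → Fin lam, subcubeMap lam k '' cube d ⊆ cube d := fun k =>
    (Set.subset_iUnion (fun k => subcubeMap lam k '' cube d) k).trans
      (cube_eq_iUnion_image_subcubeMap hlam).symm.subset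
  conv_lhs => rw [cubeVol, cube_eq_iUnion_image_subcubeMap hlam]
  rw [integral_iUnion_fintype
    (measurableSet_image_subcubeMap hlam) (pairwise_disjoint_image_subcubeMap hlam)
    fun k => IntegrableOn.mono_set hH (hsub k), mul_sum]
  exact sum_congr rfl fun k _ => setIntegral_image_subcubeMap hlam k H

end Subcube

section Periodic

variable {d : ℕ}

lemma exists_add_intVec_mem_cube (x : Ed d) : ∃ k : Fin d → ℤ, x + intVec d k ∈ cube d := by
  refine ⟨fun i => -⌊x i⌋, fun i => ?_⟩
  have : (x + intVec d fun i => -⌊x i⌋) i = x i - ⌊x i⌋ := by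
    simp [intVec, sub_eq_add_neg]
  rw [this]
  exact ⟨sub_nonneg.2 (Int.floor_le _), by linarith [Int.lt_floor_add_one (x i)]⟩

lemma PeriodicZd.norm_le_ciSup {F : Type*} [NormedAddCommGroup F] {f : Ed d → F}
    (hper : PeriodicZd d f) (hf : Continuous f) (x : Ed d) : ‖f x‖ ≤ ⨆ y, ‖f y‖ := by
  refine le_ciSup (f := fun y => ‖f y‖)
    (((isCompact_closedBall (0 : Ed d) √d).image hf.norm).bddAbove.mono ?_) x
  rintro - ⟨y, rfl⟩
  obtain ⟨k, hk⟩ := exists_add_intVec_mem_cube y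
  exact ⟨y + intVec d k, cube_subset_closedBall d hk, by simp only [hper y k]⟩

lemma periodicZd_fderiv {F : Type*} [NormedAddCommGroup F] [NormedSpace ℝ F] {f : Ed d → F}
    (hper : PeriodicZd d f) : PeriodicZd d (fderiv ℝ f) := fun x k => by
  rw [← fderiv_comp_add_right, funext fun y => hper y k]

lemma PeriodicZd.abs_sub_le_iSup_norm_fderiv_mul {f : Ed d → ℝ} (hper : PeriodicZd d f)
    (hf : ContDiff ℝ 1 f) (x y : Ed d) : |f x - f y| ≤ (⨆ z, ‖fderiv ℝ f z‖) * ‖x - y‖ := by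
  simpa only [Real.norm_eq_abs] using convex_univ.norm_image_sub_le_of_norm_fderiv_le
    (fun z _ => (hf.differentiable one_ne_zero).differentiableAt)
    (fun z _ => (periodicZd_fderiv hper).norm_le_ciSup (hf.continuous_fderiv one_ne_zero) z)
    (Set.mem_univ y) (Set.mem_univ x)

end Periodic

section Rpow

variable {p : ℝ}

lemma rpow_sub_rpow_le_mul_sub {a b M : ℝ} (hp : 1 ≤ p) (hb : 0 ≤ b) (hba : b ≤ a) (haM : a ≤ M) :
    a ^ p - b ^ p ≤ p * M ^ (p - 1) * (a - b) := by
  rcases (hb.trans hba).eq_or_lt with ha | ha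
  · obtain rfl : b = 0 := le_antisymm (ha ▸ hba) hb
    simp [← ha]
  set t := b / a
  have hbt : b = a * t := (mul_div_cancel₀ b ha.ne').symm
  have ht : 0 ≤ t := by positivity
  have hbern : 1 + p * (t - 1) ≤ t ^ p := by
    simpa using one_add_mul_self_le_rpow_one_add (by linarith : (-1 : ℝ) ≤ t - 1) hp
  have hap : a ^ p = a ^ (p - 1) * a := by rw [← Real.rpow_add_one ha.ne']; ring_nf
  have haM' : a ^ (p - 1) ≤ M ^ (p - 1) := Real.rpow_le_rpow ha.le haM (by linarith)
  calc a ^ p - b ^ p = a ^ p * (1 - t ^ p) := by rw [hbt, Real.mul_rpow ha.le ht]; ring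
    _ ≤ a ^ p * (p * (1 - t)) := by gcongr; linarith
    _ = p * a ^ (p - 1) * (a - b) := by rw [hap, hbt]; ring
    _ ≤ p * M ^ (p - 1) * (a - b) := by gcongr

lemma abs_abs_rpow_sub_abs_rpow_le {a b M : ℝ} (hp : 1 ≤ p) (ha : |a| ≤ M) (hb : |b| ≤ M) :
    |(|a|) ^ p - (|b|) ^ p| ≤ p * M ^ (p - 1) * |a - b| := by
  wlog hab : |b| ≤ |a| generalizing a b
  · rw [abs_sub_comm, abs_sub_comm a]
    exact this hb ha (le_of_not_ge hab)
  have hmono : |b| ^ p ≤ |a| ^ p := Real.rpow_le_rpow (abs_nonneg b) hab (by linarith)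
  rw [abs_of_nonneg (sub_nonneg.2 hmono)]
  calc |a| ^ p - |b| ^ p ≤ p * M ^ (p - 1) * (|a| - |b|) :=
        rpow_sub_rpow_le_mul_sub hp (abs_nonneg b) hab ha
    _ ≤ p * M ^ (p - 1) * |a - b| := by
        have : 0 ≤ M := (abs_nonneg a).trans ha
        gcongr
        exact abs_sub_abs_le_abs_sub a b

lemma abs_rpow_sub_rpow_le_rpow_abs_sub {a b : ℝ} (ha : 0 ≤ a) (hb : 0 ≤ b) (hp₀ : 0 ≤ p)
    (hp₁ : p ≤ 1) : |a ^ p - b ^ p| ≤ |a - b| ^ p := by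
  wlog hab : b ≤ a generalizing a b
  · rw [abs_sub_comm, abs_sub_comm a]
    exact this hb ha (le_of_not_ge hab)
  have hsub : a ^ p ≤ (a - b) ^ p + b ^ p := by
    simpa using Real.rpow_add_le_add_rpow (sub_nonneg.2 hab) hb hp₀ hp₁
  rw [abs_of_nonneg (sub_nonneg.2 (Real.rpow_le_rpow hb hab hp₀)), abs_of_nonneg (sub_nonneg.2 hab)]
  linarith

lemma rpow_sub_one_mul_rpow_inv_le_add {M L : ℝ} (hp : 1 ≤ p) (hM : 0 ≤ M) (hL : 0 ≤ L) :
    (M ^ (p - 1) * L) ^ p⁻¹ ≤ M + L := by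
  have hML : 0 ≤ M + L := add_nonneg hM hL
  calc (M ^ (p - 1) * L) ^ p⁻¹ ≤ ((M + L) ^ (p - 1) * (M + L)) ^ p⁻¹ := by
        gcongr
        · linarith
        · linarith
    _ = M + L := by
        rcases hML.eq_or_lt with h | h
        · rw [← h, mul_zero, Real.zero_rpow (by positivity)]
        rw [← Real.rpow_add_one h.ne', sub_add_cancel, Real.rpow_rpow_inv h.le (by linarith)]

end Rpow

section Oscillation

lemma continuous_of_abs_sub_le_mul_norm {E : Type*} [SeminormedAddCommGroup E] {F : E → ℝ} {K : ℝ}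
    (hF : ∀ x y, |F x - F y| ≤ K * ‖x - y‖) : Continuous F :=
  (LipschitzWith.of_dist_le' fun x y => by
    simpa [Real.dist_eq, dist_eq_norm] using hF x y).continuous

lemma abs_integral_mul_sub_integral_mul_integral_le {α : Type*} [MeasurableSpace α]
    {μ : Measure α} [IsProbabilityMeasure μ] {s : Set α} (hs : ∀ᵐ x ∂μ, x ∈ s) {H G : α → ℝ}
    {ε : ℝ} (hH : Integrable H μ) (hG : Integrable G μ) (hHG : Integrable (fun x => H x * G x) μ)
    (hosc : ∀ x ∈ s, ∀ y ∈ s, |H x - H y| ≤ ε) :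
    |∫ x, H x * G x ∂μ - (∫ x, H x ∂μ) * ∫ x, G x ∂μ| ≤ ε * ∫ x, |G x| ∂μ := by
  set c := ∫ x, H x ∂μ
  have hmean : ∀ x ∈ s, |H x - c| ≤ ε := fun x hx => by
    have : H x - c = ∫ y, (H x - H y) ∂μ := by
      rw [integral_sub (integrable_const _) hH, integral_const, probReal_univ, one_smul]
    have h := norm_integral_le_of_norm_le_const (μ := μ) (f := fun y => H x - H y)
      (hs.mono fun y hy => (Real.norm_eq_abs _).symm ▸ hosc x hx y hy)
    rwa [probReal_univ, mul_one, Real.norm_eq_abs, ← this] at h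
  have hsplit : ∫ x, H x * G x ∂μ - c * ∫ x, G x ∂μ = ∫ x, (H x - c) * G x ∂μ := by
    simp_rw [sub_mul]
    rw [integral_sub hHG (hG.const_mul c), integral_const_mul]
  calc |∫ x, H x * G x ∂μ - c * ∫ x, G x ∂μ| ≤ ∫ x, |(H x - c) * G x| ∂μ :=
        hsplit ▸ abs_integral_le_integral_abs
    _ ≤ ∫ x, ε * |G x| ∂μ := by
        refine integral_mono_ae ((hHG.sub (hG.const_mul c)).abs.congr ?_) (hG.abs.const_mul ε)
          (hs.mono fun x hx => ?_)
        · exact .of_forall fun x => by simp only [Pi.sub_apply, sub_mul]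
        · show |(H x - c) * G x| ≤ ε * |G x|
          rw [abs_mul]
          exact mul_le_mul_of_nonneg_right (hmean x hx) (abs_nonneg _)
    _ = ε * ∫ x, |G x| ∂μ := integral_const_mul ε _

variable {d lam : ℕ}

lemma integral_mul_comp_smul_sub_eq_sum {F G : Ed d → ℝ} (hF : Continuous F) (hG : Continuous G)
    (hGper : PeriodicZd d G) (hlam : 0 < lam) :
    ∫ x, F x * G ((lam : ℝ) • x) ∂cubeVol d - (∫ x, F x ∂cubeVol d) * ∫ x, G x ∂cubeVol d =
      ((lam : ℝ) ^ d)⁻¹ * ∑ k : Fin d → Fin lam,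
        (∫ y, F (subcubeMap lam k y) * G y ∂cubeVol d
          - (∫ y, F (subcubeMap lam k y) ∂cubeVol d) * ∫ y, G y ∂cubeVol d) := by
  have hGk : ∀ (k : Fin d → Fin lam) y, G ((lam : ℝ) • subcubeMap lam k y) = G y := fun k y => by
    rw [smul_subcubeMap hlam, hGper]
  rw [integral_cubeVol_eq_sum_subcubeMap hlam (H := fun x => F x * G ((lam : ℝ) • x))
      (hF.mul (hG.comp (continuous_const_smul _))).integrable_cubeVol,
    integral_cubeVol_eq_sum_subcubeMap hlam hF.integrable_cubeVol]
  simp_rw [hGk]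
  rw [mul_assoc, ← mul_sub, sum_mul, ← sum_sub_distrib]

lemma abs_integral_mul_comp_smul_sub_le {F G : Ed d → ℝ} {K : ℝ} (hK : 0 ≤ K)
    (hF : ∀ x y, |F x - F y| ≤ K * ‖x - y‖) (hG : Continuous G) (hGper : PeriodicZd d G)
    (hlam : 0 < lam) :
    |∫ x, F x * G ((lam : ℝ) • x) ∂cubeVol d - (∫ x, F x ∂cubeVol d) * ∫ x, G x ∂cubeVol d|
      ≤ K * √d / lam * ∫ x, |G x| ∂cubeVol d := by
  have hFc : Continuous F := continuous_of_abs_sub_le_mul_norm hF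
  have hFk : ∀ k : Fin d → Fin lam, Continuous fun y => F (subcubeMap lam k y) := fun k =>
    hFc.comp (continuous_subcubeMap k)
  have hosc : ∀ k : Fin d → Fin lam, ∀ x ∈ cube d, ∀ y ∈ cube d,
      |F (subcubeMap lam k x) - F (subcubeMap lam k y)| ≤ K * √d / lam := fun k x hx y hy =>
    calc _ ≤ K * ((lam : ℝ)⁻¹ * ‖x - y‖) := norm_subcubeMap_sub k x y ▸ hF _ _
      _ ≤ K * ((lam : ℝ)⁻¹ * √d) := by gcongr; exact norm_sub_le_sqrt_of_mem_cube hx hy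
      _ = K * √d / lam := by ring
  have hterm : ∀ k : Fin d → Fin lam,
      |∫ y, F (subcubeMap lam k y) * G y ∂cubeVol d
          - (∫ y, F (subcubeMap lam k y) ∂cubeVol d) * ∫ y, G y ∂cubeVol d|
        ≤ K * √d / lam * ∫ x, |G x| ∂cubeVol d := fun k =>
    abs_integral_mul_sub_integral_mul_integral_le (μ := cubeVol d)
      (ae_restrict_mem (measurableSet_cube d))
      (hFk k).integrable_cubeVol hG.integrable_cubeVol ((hFk k).mul hG).integrable_cubeVol
      (hosc k)
  have hcard : (Fintype.card (Fin d → Fin lam) : ℝ) = (lam : ℝ) ^ d := by simp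
  rw [integral_mul_comp_smul_sub_eq_sum hFc hG hGper hlam, abs_mul, abs_of_pos (by positivity)]
  calc _ ≤ ((lam : ℝ) ^ d)⁻¹ * ∑ _k : Fin d → Fin lam, K * √d / lam * ∫ x, |G x| ∂cubeVol d := by
        gcongr
        exact (abs_sum_le_sum_abs _ _).trans (sum_le_sum fun k _ => hterm k)
    _ = K * √d / lam * ∫ x, |G x| ∂cubeVol d := by
        rw [sum_const, card_univ, nsmul_eq_mul, hcard, inv_mul_cancel_left₀ (by positivity)]

end Oscillation

lemma abs_lpN_mul_comp_smul_sub_le {d lam : ℕ} {p M L : ℝ} (hp : 1 ≤ p) {f g : Ed d → ℝ}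
    (hfM : ∀ x, |f x| ≤ M) (hL : 0 ≤ L) (hfL : ∀ x y, |f x - f y| ≤ L * ‖x - y‖)
    (hg : Continuous g) (hgper : PeriodicZd d g) (hlam : 0 < lam) :
    |lpN d (ENNReal.ofReal p) (fun x => f x * g ((lam : ℝ) • x))
        - lpN d (ENNReal.ofReal p) f * lpN d (ENNReal.ofReal p) g|
      ≤ (p * M ^ (p - 1) * L * √d / lam) ^ p⁻¹ * lpN d (ENNReal.ofReal p) g := by
  have hp₀ : 0 < p := by linarith
  have hM : 0 ≤ M := (abs_nonneg _).trans (hfM 0)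
  have hf : Continuous f := continuous_of_abs_sub_le_mul_norm hfL
  have hlpN : ∀ h : Ed d → ℝ, Continuous h →
      lpN d (ENNReal.ofReal p) h = (∫ x, |h x| ^ p ∂cubeVol d) ^ p⁻¹ := fun h hh => by
    simpa only [Real.norm_eq_abs] using lpN_eq_integral_norm_rpow hp₀ hh.aestronglyMeasurable
  set F : Ed d → ℝ := fun x => |f x| ^ p
  set G : Ed d → ℝ := fun x => |g x| ^ p
  have hF : ∀ x y, |F x - F y| ≤ p * M ^ (p - 1) * L * ‖x - y‖ := fun x y =>
    (abs_abs_rpow_sub_abs_rpow_le hp (hfM x) (hfM y)).trans <| by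
      rw [mul_assoc _ L]; gcongr; exact hfL x y
  have hG : Continuous G := hg.abs.rpow_const fun _ => Or.inr hp₀.le
  have hGper : PeriodicZd d G := fun x k => by simp only [G, hgper x k]
  have hG₀ : ∀ x, 0 ≤ G x := fun x => by positivity
  have key := abs_integral_mul_comp_smul_sub_le (by positivity) hF hG hGper hlam
  rw [hlpN (fun x => f x * g ((lam : ℝ) • x)) (hf.mul (hg.comp (continuous_const_smul _))),
    hlpN f hf, hlpN g hg, ← Real.mul_rpow (integral_nonneg fun x => by positivity)
      (integral_nonneg fun x => by positivity)]
  simp_rw [abs_mul, Real.mul_rpow (abs_nonneg _) (abs_nonneg _)]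
  calc _ ≤ |∫ x, F x * G ((lam : ℝ) • x) ∂cubeVol d
          - (∫ x, F x ∂cubeVol d) * ∫ x, G x ∂cubeVol d| ^ p⁻¹ :=
        abs_rpow_sub_rpow_le_rpow_abs_sub (integral_nonneg fun x => by positivity)
          (mul_nonneg (integral_nonneg fun x => by positivity) (integral_nonneg hG₀))
          (by positivity) (inv_le_one_of_one_le₀ hp)
    _ ≤ (p * M ^ (p - 1) * L * √d / lam * ∫ x, |G x| ∂cubeVol d) ^ p⁻¹ := by gcongr
    _ = _ := by
        simp_rw [abs_of_nonneg (hG₀ _)]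
        rw [Real.mul_rpow (by positivity) (integral_nonneg hG₀)]

/-- **Improved Hölder inequality for fast oscillations.** For every `p ∈ [1,∞)` there is a
constant `C_p` such that for all smooth functions `f, g` on `𝕋^d` and every `λ ∈ ℕ₊`,
`| ‖f·g_λ‖_{L^p} - ‖f‖_{L^p}‖g‖_{L^p} | ≤ C_p λ^{-1/p} ‖f‖_{C¹} ‖g‖_{L^p}`, where
`g_λ(x) = g(λx)` and `‖f‖_{C¹}` is the sup norm of `f` plus the sup norm of its gradient. -/
theorem improved_holder (d : ℕ) (p : ℝ) (hp : 1 ≤ p) :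
    ∃ C : ℝ, ∀ f g : Ed d → ℝ,
      ContDiff ℝ (⊤ : ℕ∞) f → PeriodicZd d f →
      ContDiff ℝ (⊤ : ℕ∞) g → PeriodicZd d g →
      ∀ lam : ℕ, 0 < lam →
        |lpN d (ENNReal.ofReal p) (fun x => f x * g ((lam : ℝ) • x))
            - lpN d (ENNReal.ofReal p) f * lpN d (ENNReal.ofReal p) g|
          ≤ C / (lam : ℝ) ^ (1 / p) *
              ((⨆ x, ‖f x‖) + ⨆ x, ‖fderiv ℝ f x‖) * lpN d (ENNReal.ofReal p) g := by
  refine ⟨(p * √d) ^ (1 / p), fun f g hf hfper hg hgper lam hlam => ?_⟩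
  set M := ⨆ x, ‖f x‖
  set L := ⨆ x, ‖fderiv ℝ f x‖
  have hM : 0 ≤ M := Real.iSup_nonneg fun _ => norm_nonneg _
  have hL : 0 ≤ L := Real.iSup_nonneg fun _ => norm_nonneg _
  have hfM : ∀ x, |f x| ≤ M := hfper.norm_le_ciSup hf.continuous
  have hfL : ∀ x y, |f x - f y| ≤ L * ‖x - y‖ :=
    hfper.abs_sub_le_iSup_norm_fderiv_mul (hf.of_le (by simp))
  calc _ ≤ (p * M ^ (p - 1) * L * √d / lam) ^ p⁻¹ * lpN d (ENNReal.ofReal p) g :=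
        abs_lpN_mul_comp_smul_sub_le hp hfM hL hfL hg.continuous hgper hlam
    _ = (p * √d) ^ (1 / p) / (lam : ℝ) ^ (1 / p) * (M ^ (p - 1) * L) ^ p⁻¹
          * lpN d (ENNReal.ofReal p) g := by
        rw [show p * M ^ (p - 1) * L * √d / lam = p * √d / lam * (M ^ (p - 1) * L) by ring,
          Real.mul_rpow (by positivity) (by positivity),
          Real.div_rpow (by positivity) (by positivity), one_div]
    _ ≤ _ := by
        gcongr
        · exact ENNReal.toReal_nonneg
        · exact rpow_sub_one_mul_rpow_inv_le_add hp hM hL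
end
end

section
/- Let N ∈ N and define the bilinear operator R_N(f,g) := Σ_{k=0}^{N-1} (-1)^k D^k f · D^{-k-1} g + D^{-1}( (-1)^N D^N f · D^{-N} g - ⨍_{T^d} fg ) for f ∈ C^∞(T^d) and g ∈ C_0^∞(T^d). Then div(R_N(f,g)) = fg - ⨍_{T^d} fg. -/
open MeasureTheory Finset
open scoped ENNReal InnerProductSpace

noncomputable section

/-- The bilinear antidivergence operator
`ℛ_N(f,g) = ∑_{k<N} (-1)^k 𝒟^k f · 𝒟^{-k-1} g + 𝒟^{-1}((-1)^N 𝒟^N f · 𝒟^{-N} g - ⨍ fg)`,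
written in terms of the Laplacian and the gradient. Here `G` encodes the antiderivatives of
`g` (namely `Δ^{⌈N/2⌉} G = g`, so `𝒟^{-2m} g = Δ^{⌈N/2⌉ - m} G` and
`𝒟^{-2m-1} g = ∇ Δ^{⌈N/2⌉ - m - 1} G`), and `uo` encodes the final antidivergence
(`Δ uo = (-1)^N 𝒟^N f · 𝒟^{-N} g - ⨍ fg`, and `𝒟^{-1}(⋯) = ∇ uo`). -/
def RNop (d N : ℕ) (f G uo : Ed d → ℝ) : Ed d → Ed d :=
  fun x =>
    (∑ k ∈ Finset.range N,
      if Even k then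
        ((-1 : ℝ) ^ k * (lap d)^[k / 2] f x) •
          gradient ((lap d)^[(N + 1) / 2 - k / 2 - 1] G) x
      else
        ((-1 : ℝ) ^ k * (lap d)^[(N + 1) / 2 - (k / 2 + 1)] G x) •
          gradient ((lap d)^[k / 2] f) x)
    + gradient uo x

/-!
The `k`-th summand of `ℛ_N` is `(-1)^k (𝒟^k f) · (𝒟^{-k-1} g)`, and by the product rule its
divergence is `(-1)^k (P_k + P_{k+1})`, where `P_k` is the pairing of `𝒟^k f` with `𝒟^{-k} g`
(a product when `k` is even, an inner product of gradients when `k` is odd). The sum over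
`k < N` telescopes to `P_0 - (-1)^N P_N = fg - (-1)^N P_N`, and the final antidivergence
contributes `Δ uo = (-1)^N P_N - ⨍ fg`.
-/

open scoped ContDiff

section VectorCalculus

variable {d : ℕ}

lemma toDual_symm_apply_single (φ : StrongDual ℝ (Ed d)) (i : Fin d) :
    (InnerProductSpace.toDual ℝ (Ed d)).symm φ i = φ (EuclideanSpace.single i 1) := by
  rw [← InnerProductSpace.toDual_symm_apply, EuclideanSpace.inner_single_right]
  simp

lemma gradient_apply_eq_fderiv_single (h : Ed d → ℝ) (x : Ed d) (i : Fin d) :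
    gradient h x i = fderiv ℝ h x (EuclideanSpace.single i 1) :=
  toDual_symm_apply_single _ i

lemma contDiff_gradient {h : Ed d → ℝ} (hh : ContDiff ℝ ∞ h) : ContDiff ℝ ∞ (gradient h) :=
  (InnerProductSpace.toDual ℝ (Ed d)).symm.contDiff.comp (hh.fderiv_right le_rfl)

lemma contDiff_lap {h : Ed d → ℝ} (hh : ContDiff ℝ ∞ h) : ContDiff ℝ ∞ (lap d h) :=
  ContDiff.sum fun i _ => (ContinuousMultilinearMap.apply ℝ (fun _ : Fin 2 => Ed d) ℝ
    (fun _ => EuclideanSpace.single i 1)).contDiff.comp (hh.iteratedFDeriv_right le_rfl)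

lemma contDiff_iterate_lap {h : Ed d → ℝ} (hh : ContDiff ℝ ∞ h) (n : ℕ) :
    ContDiff ℝ ∞ ((lap d)^[n] h) := by
  induction n with
  | zero => exact hh
  | succ n ih => rw [Function.iterate_succ_apply']; exact contDiff_lap ih

lemma divg_add {V W : Ed d → Ed d} {x : Ed d} (hV : DifferentiableAt ℝ V x)
    (hW : DifferentiableAt ℝ W x) : divg d (V + W) x = divg d V x + divg d W x := by
  simp only [divg, fderiv_add hV hW, ← Finset.sum_add_distrib]
  rfl

lemma divg_sum {ι : Type*} {s : Finset ι} {V : ι → Ed d → Ed d} {x : Ed d}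
    (hV : ∀ k ∈ s, DifferentiableAt ℝ (V k) x) :
    divg d (∑ k ∈ s, V k) x = ∑ k ∈ s, divg d (V k) x := by
  simp only [divg, fderiv_sum hV, FunLike.coe_sum, Finset.sum_apply, WithLp.ofLp_sum]
  exact Finset.sum_comm

lemma divg_const_smul (c : ℝ) (V : Ed d → Ed d) (x : Ed d) :
    divg d (c • V) x = c * divg d V x := by
  simp only [divg, fderiv_const_smul_field, Finset.mul_sum]
  rfl

lemma divg_smul {a : Ed d → ℝ} {V : Ed d → Ed d} {x : Ed d} (ha : DifferentiableAt ℝ a x)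
    (hV : DifferentiableAt ℝ V x) :
    divg d (fun y => a y • V y) x = ⟪gradient a x, V x⟫_ℝ + a x * divg d V x := by
  simp only [divg, fderiv_fun_smul ha hV, add_apply, smul_apply,
    ContinuousLinearMap.smulRight_apply, PiLp.add_apply, PiLp.smul_apply, smul_eq_mul, Finset.sum_add_distrib, Finset.mul_sum,
    PiLp.inner_apply, RCLike.inner_apply, conj_trivial, gradient_apply_eq_fderiv_single]
  rw [add_comm]
  simp only [mul_comm]

lemma divg_gradient (h : Ed d → ℝ) (x : Ed d) : divg d (gradient h) x = lap d h x := by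
  have hgrad : gradient h = (InnerProductSpace.toDual ℝ (Ed d)).symm ∘ fderiv ℝ h := rfl
  simp only [divg, lap, iteratedFDeriv_two_apply, hgrad,
    (InnerProductSpace.toDual ℝ (Ed d)).symm.comp_fderiv, ContinuousLinearMap.coe_comp,
    Function.comp_apply, ContinuousLinearEquiv.coe_coe]
  exact Finset.sum_congr rfl fun i _ => toDual_symm_apply_single _ i

lemma divg_smul_gradient {a b : Ed d → ℝ} (ha : ContDiff ℝ ∞ a) (hb : ContDiff ℝ ∞ b)
    (x : Ed d) :
    divg d (fun y => a y • gradient b y) x = ⟪gradient a x, gradient b x⟫_ℝ + a x * lap d b x := by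
  rw [divg_smul (ha.differentiable (by simp)).differentiableAt
    ((contDiff_gradient hb).differentiable (by simp)).differentiableAt, divg_gradient]

end VectorCalculus

lemma sum_range_neg_one_pow_mul_add (q : ℕ → ℝ) (N : ℕ) :
    ∑ k ∈ Finset.range N, (-1 : ℝ) ^ k * (q k + q (k + 1)) = q 0 - (-1) ^ N * q N := by
  have telescope := Finset.sum_range_sub' (fun k => (-1 : ℝ) ^ k * q k) N
  rw [pow_zero, one_mul] at telescope
  rw [← telescope]
  refine Finset.sum_congr rfl fun k _ => ?_
  ring

section Antidivergence

variable {d N : ℕ} {f G : Ed d → ℝ}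

variable (d N f G) in
def RNterm (k : ℕ) : Ed d → Ed d :=
  if Even k then fun y => (lap d)^[k / 2] f y • gradient ((lap d)^[(N + 1) / 2 - k / 2 - 1] G) y
  else fun y => (lap d)^[(N + 1) / 2 - (k / 2 + 1)] G y • gradient ((lap d)^[k / 2] f) y

variable (d N f G) in
/-- The paper's `𝒟^k f · 𝒟^{-k} g`, where `g = Δ^{⌈N/2⌉} G`. -/
def RNpair (k : ℕ) (x : Ed d) : ℝ :=
  if Even k then (lap d)^[k / 2] f x * (lap d)^[(N + 1) / 2 - k / 2] G x
  else ⟪gradient ((lap d)^[k / 2] f) x, gradient ((lap d)^[(N + 1) / 2 - k / 2 - 1] G) x⟫_ℝ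

lemma RNop_eq_sum (uo : Ed d → ℝ) :
    RNop d N f G uo = (∑ k ∈ Finset.range N, (-1 : ℝ) ^ k • RNterm d N f G k) + gradient uo := by
  funext y
  simp only [RNop, RNterm, Pi.add_apply, Finset.sum_apply, Pi.smul_apply]
  refine congrArg (· + _) (Finset.sum_congr rfl fun k _ => ?_)
  split_ifs <;> exact mul_smul _ _ _

lemma contDiff_RNterm (hf : ContDiff ℝ ∞ f) (hG : ContDiff ℝ ∞ G) (k : ℕ) :
    ContDiff ℝ ∞ (RNterm d N f G k) := by
  unfold RNterm
  split_ifs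
  · exact (contDiff_iterate_lap hf _).smul (contDiff_gradient (contDiff_iterate_lap hG _))
  · exact (contDiff_iterate_lap hG _).smul (contDiff_gradient (contDiff_iterate_lap hf _))

lemma divg_RNterm (hf : ContDiff ℝ ∞ f) (hG : ContDiff ℝ ∞ G) {k : ℕ} (hk : k < N)
    (x : Ed d) : divg d (RNterm d N f G k) x = RNpair d N f G k x + RNpair d N f G (k + 1) x := by
  obtain ⟨j, rfl | rfl⟩ := Nat.even_or_odd' k
  · have hj : (N + 1) / 2 - j - 1 + 1 = (N + 1) / 2 - j := by omega
    have hj' : (2 * j + 1) / 2 = j := by omega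
    simp only [RNterm, RNpair, even_two_mul, Nat.not_even_two_mul_add_one, if_true, if_false,
      Nat.mul_div_cancel_left _ two_pos, hj']
    rw [divg_smul_gradient (contDiff_iterate_lap hf _) (contDiff_iterate_lap hG _),
      ← Function.iterate_succ_apply' (lap d), Nat.succ_eq_add_one, hj]
    ring
  · have hj : (2 * j + 1) / 2 = j := by omega
    have hj' : (2 * j + 1 + 1) / 2 = j + 1 := by omega
    simp only [RNterm, RNpair, Nat.not_even_two_mul_add_one, Nat.even_add_one, if_true, if_false,
      not_false_eq_true, hj, hj', Nat.sub_sub]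
    rw [divg_smul_gradient (contDiff_iterate_lap hG _) (contDiff_iterate_lap hf _),
      ← Function.iterate_succ_apply' (lap d), real_inner_comm]
    ring

lemma RNpair_zero (x : Ed d) : RNpair d N f G 0 x = f x * (lap d)^[(N + 1) / 2] G x := by
  simp [RNpair]

lemma RNpair_self (x : Ed d) : RNpair d N f G N x =
    if Even N then (lap d)^[N / 2] f x * (lap d)^[(N + 1) / 2 - N / 2] G x
    else ⟪gradient ((lap d)^[N / 2] f) x, gradient G x⟫_ℝ := by
  unfold RNpair
  split_ifs with hN
  · rfl
  · rw [show (N + 1) / 2 - N / 2 - 1 = 0 by grind, Function.iterate_zero_apply]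

end Antidivergence

theorem RN_antidivergence_general (d N : ℕ) (f g G uo : Ed d → ℝ)
    (hf : ContDiff ℝ (⊤ : ℕ∞) f)
    (hG : ContDiff ℝ (⊤ : ℕ∞) G)
    (hGeq : (lap d)^[(N + 1) / 2] G = g)
    (huo : ContDiff ℝ (⊤ : ℕ∞) uo)
    (huoeq : ∀ x, lap d uo x =
      (-1 : ℝ) ^ N *
        (if Even N then (lap d)^[N / 2] f x * (lap d)^[(N + 1) / 2 - N / 2] G x
          else ⟪gradient ((lap d)^[N / 2] f) x, gradient G x⟫_ℝ)
        - ⨍ y, f y * g y ∂(cubeVol d)) :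
    ∀ x, divg d (RNop d N f G uo) x = f x * g x - ⨍ y, f y * g y ∂(cubeVol d) := by
  intro x
  have hterm : ∀ k ∈ Finset.range N, DifferentiableAt ℝ ((-1 : ℝ) ^ k • RNterm d N f G k) x :=
    fun k _ => (((contDiff_RNterm hf hG k).differentiable (by simp)).differentiableAt).const_smul _
  have hsum : divg d (∑ k ∈ Finset.range N, (-1 : ℝ) ^ k • RNterm d N f G k) x
      = RNpair d N f G 0 x - (-1) ^ N * RNpair d N f G N x := by
    rw [divg_sum hterm, ← sum_range_neg_one_pow_mul_add (RNpair d N f G · x)]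
    refine Finset.sum_congr rfl fun k hk => ?_
    rw [divg_const_smul, divg_RNterm hf hG (Finset.mem_range.mp hk)]
  rw [RNop_eq_sum, divg_add (DifferentiableAt.sum hterm)
      ((contDiff_gradient huo).differentiable (by simp)).differentiableAt,
    hsum, divg_gradient, huoeq, ← RNpair_self, RNpair_zero, hGeq]
  ring

/-- **`ℛ_N` is an antidivergence:** `div (ℛ_N(f,g)) = fg - ⨍_{𝕋^d} fg` for
`f ∈ C^∞(𝕋^d)` and `g ∈ C₀^∞(𝕋^d)`. -/
theorem RN_antidivergence (d N : ℕ) (f g G uo : Ed d → ℝ)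
    (hf : ContDiff ℝ (⊤ : ℕ∞) f) (hfp : PeriodicZd d f)
    (hg : ContDiff ℝ (⊤ : ℕ∞) g) (hgp : PeriodicZd d g)
    (hgm : (∫ x, g x ∂(cubeVol d)) = 0)
    (hG : ContDiff ℝ (⊤ : ℕ∞) G) (hGp : PeriodicZd d G)
    (hGm : (∫ x, G x ∂(cubeVol d)) = 0)
    (hGeq : (lap d)^[(N + 1) / 2] G = g)
    (huo : ContDiff ℝ (⊤ : ℕ∞) uo) (huop : PeriodicZd d uo)
    (huoeq : ∀ x, lap d uo x =
      (-1 : ℝ) ^ N *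
        (if Even N then (lap d)^[N / 2] f x * (lap d)^[(N + 1) / 2 - N / 2] G x
          else ⟪gradient ((lap d)^[N / 2] f) x, gradient G x⟫_ℝ)
        - ⨍ y, f y * g y ∂(cubeVol d)) :
    ∀ x, divg d (RNop d N f G uo) x = f x * g x - ⨍ y, f y * g y ∂(cubeVol d) :=
  RN_antidivergence_general d N f g G uo hf hG hGeq huo huoeq
end
end
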